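/- Let D ⊆ H₋ be compact convex with F = D ∩ H, and suppose E ⊆ H₊ is a compact convex set contained in a convex cone Σ with tip at a point at infinity (i.e., Σ is the limit of cones Cone_{p_i}(F) with p_i → ∞ in a fixed direction u transverse to H; equivalently Σ = F + ℝ_{≥0}·u), such that D ∩ E = D ∩ H = E ∩ H = F and for each x₁ ∈ Σ and x₂ ∈ D the segment [x₁, x₂] meets H inside F. Then D ∪ E is convex. -/

import Mathlib

/-!
Since `D` and `E` lie on opposite sides of `H`, a segment from `x ∈ D` to `y ∈ E` crosses `H` at
some point `z`, which by hypothesis lies in `F = D ∩ E`. Splitting the segment at `z`, convexity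
gives `[x, z] ⊆ D` and `[z, y] ⊆ E`.
-/

open Set AffineMap Convex

section

variable {𝕜 V : Type*} [Field 𝕜] [LinearOrder 𝕜] [IsStrictOrderedRing 𝕜]
  [AddCommGroup V] [Module 𝕜 V]

theorem segment_subset_union_segment {x y z : V} (hz : z ∈ [x -[𝕜] y]) :
    [x -[𝕜] y] ⊆ [x -[𝕜] z] ∪ [z -[𝕜] y] := by
  intro w hw
  rw [mem_segment_iff_wbtw] at hz hw
  simp only [mem_union, mem_segment_iff_wbtw]
  obtain ⟨s, hs, rfl⟩ := hz
  obtain ⟨t, ht, rfl⟩ := id hw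
  rcases wbtw_or_wbtw_smul_vadd_of_nonneg x (y -ᵥ x) ht.1 hs.1 with h | h
  · left
    simpa only [lineMap_apply] using h
  · right
    exact hw.trans_left_right (by simpa only [lineMap_apply] using h)

theorem exists_mem_segment_apply_eq (f : V →ᵃ[𝕜] 𝕜) {x y : V} {c : 𝕜} (hx : f x ≤ c)
    (hy : c ≤ f y) : ∃ z ∈ [x -[𝕜] y], f z = c := by
  have hc : c ∈ f '' [x -[𝕜] y] := by
    rw [image_segment, segment_eq_Icc (hx.trans hy)]
    exact ⟨hx, hy⟩
  exact hc

theorem Convex.union_of_segment_inter_level_subset {f : V →ᵃ[𝕜] 𝕜} {c : 𝕜} {s t : Set V}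
    (hs : Convex 𝕜 s) (ht : Convex 𝕜 t) (hsf : s ⊆ {x | f x ≤ c}) (htf : t ⊆ {x | c ≤ f x})
    (hcross : ∀ x ∈ s, ∀ y ∈ t, [x -[𝕜] y] ∩ {z | f z = c} ⊆ s ∩ t) :
    Convex 𝕜 (s ∪ t) := by
  have key : ∀ x ∈ s, ∀ y ∈ t, [x -[𝕜] y] ⊆ s ∪ t := by
    intro x hx y hy
    obtain ⟨z, hz, hfz⟩ := exists_mem_segment_apply_eq f (hsf hx) (htf hy)
    obtain ⟨hzs, hzt⟩ := hcross x hx y hy ⟨hz, hfz⟩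
    exact (segment_subset_union_segment hz).trans
      (union_subset_union (hs.segment_subset hx hzs) (ht.segment_subset hzt hy))
  rw [convex_iff_segment_subset]
  rintro x (hx | hx) y (hy | hy)
  · exact (hs.segment_subset hx hy).trans subset_union_left
  · exact key x hx y hy
  · rw [segment_symm]
    exact key y hy x hx
  · exact (ht.segment_subset hx hy).trans subset_union_right

end

theorem stmt_18_general {n : ℕ} (f : EuclideanSpace ℝ (Fin n) →ₗ[ℝ] ℝ) (c : ℝ)
    (D : Set (EuclideanSpace ℝ (Fin n))) (hDconv : Convex ℝ D)
    (hD : D ⊆ {x | f x ≤ c})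
    (F : Set (EuclideanSpace ℝ (Fin n)))
    (Sig : Set (EuclideanSpace ℝ (Fin n)))
    (E : Set (EuclideanSpace ℝ (Fin n))) (hEconv : Convex ℝ E)
    (hE : E ⊆ Sig ∩ {x | c ≤ f x})
    (hDE : D ∩ E = F)
    (hcross : ∀ x₁ ∈ Sig, ∀ x₂ ∈ D, segment ℝ x₁ x₂ ∩ {x | f x = c} ⊆ F) :
    Convex ℝ (D ∪ E) := by
  refine hDconv.union_of_segment_inter_level_subset (f := f.toAffineMap) hEconv hD
    (fun y hy ↦ (hE hy).2) fun x hx y hy ↦ ?_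
  rw [hDE, segment_symm]
  exact hcross y (hE hy).1 x hx

theorem stmt_18 {n : ℕ} (f : EuclideanSpace ℝ (Fin n) →ₗ[ℝ] ℝ) (hf : f ≠ 0) (c : ℝ)
    (D : Set (EuclideanSpace ℝ (Fin n))) (hDc : IsCompact D) (hDconv : Convex ℝ D)
    (hD : D ⊆ {x | f x ≤ c})
    (u : EuclideanSpace ℝ (Fin n)) (hu : ‖u‖ = 1) (hfu : 0 < f u)
    (F : Set (EuclideanSpace ℝ (Fin n))) (hF : F = D ∩ {x | f x = c})
    (Sig : Set (EuclideanSpace ℝ (Fin n)))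
    (hSig : Sig = {y | ∃ q ∈ F, ∃ t : ℝ, 0 ≤ t ∧ y = q + t • u})
    (E : Set (EuclideanSpace ℝ (Fin n))) (hEc : IsCompact E) (hEconv : Convex ℝ E)
    (hE : E ⊆ Sig ∩ {x | c ≤ f x})
    (hDE : D ∩ E = F) (hEH : E ∩ {x | f x = c} = F) (hDH : D ∩ {x | f x = c} = F)
    (hcross : ∀ x₁ ∈ Sig, ∀ x₂ ∈ D, segment ℝ x₁ x₂ ∩ {x | f x = c} ⊆ F) :
    Convex ℝ (D ∪ E) :=
  stmt_18_general f c D hDconv hD F Sig E hEconv hE hDE hcross
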